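/- arXiv:2507.15682 — 2 statements merged into one kernel-verified Lean document; each statement's English description precedes it below -/
import Mathlib

section
/- For d ∈ [0, 1), every offer s ∈ S that maximizes π(·, H, d) over S is a minimal-winning-coalition offer with the non-proposer's share bounded by τ̄: it satisfies min{s_B, s_C} = 0 and max{s_B, s_C} ≤ τ̄. -/
open MeasureTheory Filter

noncomputable section

/-- The unit simplex of offers `(s_A, s_B, s_C)`. -/
def SimplexS : Set (ℝ × ℝ × ℝ) :=
  {s | 0 ≤ s.1 ∧ 0 ≤ s.2.1 ∧ 0 ≤ s.2.2 ∧ s.1 + s.2.1 + s.2.2 = 1}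

/-- Acceptance probability `Λ(b, c, G) = G({(τB, τC) : τB ≤ b or τC ≤ c})`. -/
def Lam (b c : ℝ) (G : Measure (ℝ × ℝ)) : ℝ :=
  (G {p : ℝ × ℝ | p.1 ≤ b ∨ p.2 ≤ c}).toReal

/-- Joint CDF `G(x, y) = G((−∞, x] × (−∞, y])`. -/
def jointCDF (G : Measure (ℝ × ℝ)) (x y : ℝ) : ℝ :=
  (G (Set.Iic x ×ˢ Set.Iic y)).toReal

/-- Proposer's expected payoff `π(s, G, d) = d + (s_A − d)·Λ(s_B, s_C, G)`. -/
def pay (s : ℝ × ℝ × ℝ) (G : Measure (ℝ × ℝ)) (d : ℝ) : ℝ :=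
  d + (s.1 - d) * Lam s.2.1 s.2.2 G

/-- Modified payoff `π̂(s, G, d) = d + max{s_A − d, 0}·Λ(s_B, s_C, G)`. -/
def payHat (s : ℝ × ℝ × ℝ) (G : Measure (ℝ × ℝ)) (d : ℝ) : ℝ :=
  d + max (s.1 - d) 0 * Lam s.2.1 s.2.2 G

/-- The uniform distribution on `[0, τ]`. -/
def uniformIcc (τ : ℝ) : Measure ℝ :=
  (ENNReal.ofReal τ)⁻¹ • volume.restrict (Set.Icc 0 τ)

/-- Weak convergence of measures: convergence of integrals of all bounded continuous
functions. -/
def WeakLim (Hn : ℕ → Measure (ℝ × ℝ)) (H : Measure (ℝ × ℝ)) : Prop :=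
  ∀ f : BoundedContinuousFunction (ℝ × ℝ) ℝ,
    Tendsto (fun n => ∫ p, f p ∂(Hn n)) atTop (nhds (∫ p, f p ∂H))

/-
Offering more than `τ̄` to a responder is wasteful: every threshold lies below `τ̄`, so the
excess can be returned to the proposer without losing acceptance. If both responders get a
positive share, inclusion–exclusion and the uniform marginals give
`Λ(s_B, s_C) = (s_B + s_C)/τ̄ - H(s_B, s_C) < (s_B + s_C)/τ̄` by Assumption 1, so the payoff is
strictly below `d + (1 - d)²/(4τ̄)`, the value that the one-responder offer
`((1 + d)/2, (1 - d)/2, 0)` already guarantees.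
-/

open Set

lemma uniformIcc_Iic {τ b : ℝ} (hτ : 0 < τ) (hb : b ≤ τ) :
    uniformIcc τ (Iic b) = ENNReal.ofReal (b / τ) := by
  have hIcc : Iic b ∩ Icc 0 τ = Icc 0 b := by
    ext x
    simp only [mem_inter_iff, mem_Iic, mem_Icc]
    exact ⟨fun ⟨hxb, hx0, _⟩ => ⟨hx0, hxb⟩, fun ⟨hx0, hxb⟩ => ⟨hxb, hx0, hxb.trans hb⟩⟩
  rw [uniformIcc, Measure.smul_apply, Measure.restrict_apply measurableSet_Iic, hIcc,
    Real.volume_Icc, sub_zero, smul_eq_mul, ENNReal.ofReal_div_of_pos hτ, ENNReal.div_eq_inv_mul]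

lemma measure_preimage_Iic_of_map_eq_uniformIcc {α : Type*} [MeasurableSpace α] {μ : Measure α}
    {f : α → ℝ} {τ b : ℝ} (hf : Measurable f) (hμ : μ.map f = uniformIcc τ) (hτ : 0 < τ)
    (hb : b ≤ τ) : μ (f ⁻¹' Iic b) = ENNReal.ofReal (b / τ) := by
  rw [← Measure.map_apply hf measurableSet_Iic, hμ, uniformIcc_Iic hτ hb]

section Acceptance

variable {G : Measure (ℝ × ℝ)}

lemma Lam_eq_one_of_ae [IsProbabilityMeasure G] {b c : ℝ}
    (h : ∀ᵐ p ∂G, p.1 ≤ b ∨ p.2 ≤ c) : Lam b c G = 1 := by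
  rw [Lam, measure_congr (ae_eq_univ.mpr (mem_ae_iff.mp h)), measure_univ, ENNReal.toReal_one]

variable [IsFiniteMeasure G]

lemma Lam_add_jointCDF (b c : ℝ) :
    Lam b c G + jointCDF G b c
      = (G (Prod.fst ⁻¹' Iic b)).toReal + (G (Prod.snd ⁻¹' Iic c)).toReal := by
  have h := measure_union_add_inter (μ := G) (Prod.fst ⁻¹' Iic b)
    (measurable_snd measurableSet_Iic : MeasurableSet (Prod.snd ⁻¹' Iic c))
  rw [← Set.prod_eq] at h
  rw [Lam, jointCDF, ← ENNReal.toReal_add (measure_ne_top _ _) (measure_ne_top _ _),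
    ← ENNReal.toReal_add (measure_ne_top _ _) (measure_ne_top _ _), ← h]
  rfl

lemma jointCDF_mono {b b' c c' : ℝ} (hb : b' ≤ b) (hc : c' ≤ c) :
    jointCDF G b' c' ≤ jointCDF G b c :=
  ENNReal.toReal_mono (measure_ne_top _ _)
    (measure_mono (prod_mono (Iic_subset_Iic.mpr hb) (Iic_subset_Iic.mpr hc)))

variable {τ : ℝ}

lemma Lam_eq_of_map_eq_uniformIcc (h₁ : G.map Prod.fst = uniformIcc τ)
    (h₂ : G.map Prod.snd = uniformIcc τ) (hτ : 0 < τ) {b c : ℝ} (hb₀ : 0 ≤ b) (hb : b ≤ τ)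
    (hc₀ : 0 ≤ c) (hc : c ≤ τ) : Lam b c G = (b + c) / τ - jointCDF G b c := by
  have h := Lam_add_jointCDF (G := G) b c
  rw [measure_preimage_Iic_of_map_eq_uniformIcc measurable_fst h₁ hτ hb,
    measure_preimage_Iic_of_map_eq_uniformIcc measurable_snd h₂ hτ hc,
    ENNReal.toReal_ofReal (by positivity), ENNReal.toReal_ofReal (by positivity)] at h
  rw [add_div]
  linarith

lemma div_le_Lam_of_map_fst_eq_uniformIcc (h₁ : G.map Prod.fst = uniformIcc τ) (hτ : 0 < τ)
    {b : ℝ} (hb₀ : 0 ≤ b) (hb : b ≤ τ) (c : ℝ) : b / τ ≤ Lam b c G := by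
  rw [← ENNReal.toReal_ofReal (by positivity : 0 ≤ b / τ),
    ← measure_preimage_Iic_of_map_eq_uniformIcc measurable_fst h₁ hτ hb]
  exact ENNReal.toReal_mono (measure_ne_top _ _) (measure_mono fun p hp => Or.inl hp)

end Acceptance

section Payoff

variable {G : Measure (ℝ × ℝ)} {d τ : ℝ} {s : ℝ × ℝ × ℝ}

lemma pay_eq_fst_of_Lam_eq_one (h : Lam s.2.1 s.2.2 G = 1) : pay s G d = s.1 := by
  rw [pay, h]
  ring

lemma pay_lt_of_Lam_lt (hs : s ∈ SimplexS) (hd : d < 1) (hτ : 0 < τ)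
    (hΛ : Lam s.2.1 s.2.2 G < (s.2.1 + s.2.2) / τ) :
    pay s G d < d + (1 - d) ^ 2 / (4 * τ) := by
  obtain ⟨-, -, -, hsum⟩ := hs
  have hgain : 0 < (1 - d) ^ 2 / (4 * τ) := by
    have : 0 < 1 - d := by linarith
    positivity
  rcases le_or_gt s.1 d with hsd | hsd
  · have : (s.1 - d) * Lam s.2.1 s.2.2 G ≤ 0 :=
      mul_nonpos_of_nonpos_of_nonneg (by linarith) ENNReal.toReal_nonneg
    rw [pay]
    linarith
  · -- AM–GM: `(1 - t - d) t ≤ (1 - d)²/4` for the total responder share `t`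
    have hamgm : (s.1 - d) * (s.2.1 + s.2.2) ≤ (1 - d) ^ 2 / 4 := by
      nlinarith [sq_nonneg (1 - d - 2 * (s.2.1 + s.2.2))]
    calc pay s G d < d + (s.1 - d) * ((s.2.1 + s.2.2) / τ) := by
          rw [pay]
          gcongr
      _ = d + (s.1 - d) * (s.2.1 + s.2.2) / τ := by ring
      _ ≤ d + (1 - d) ^ 2 / 4 / τ := by gcongr
      _ = d + (1 - d) ^ 2 / (4 * τ) := by ring

lemma le_pay_of_map_fst_eq_uniformIcc [IsFiniteMeasure G]
    (h₁ : G.map Prod.fst = uniformIcc τ) (hτ : 0 < τ) (hd : d ≤ 1) (hdτ : (1 - d) / 2 ≤ τ) :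
    d + (1 - d) ^ 2 / (4 * τ) ≤ pay ((1 + d) / 2, (1 - d) / 2, 0) G d := by
  have hΛ := div_le_Lam_of_map_fst_eq_uniformIcc h₁ hτ (by linarith) hdτ 0
  rw [pay]
  calc d + (1 - d) ^ 2 / (4 * τ) = d + ((1 + d) / 2 - d) * ((1 - d) / 2 / τ) := by
        field_simp
        ring
    _ ≤ _ := by gcongr; linarith

end Payoff

section Optimality

variable {G : Measure (ℝ × ℝ)} {d τ : ℝ} {s : ℝ × ℝ × ℝ}

lemma snd_fst_le_of_isMaxOn [IsProbabilityMeasure G] (hG : ∀ᵐ p ∂G, p.1 ≤ τ) (hτ : 0 ≤ τ)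
    (hs : s ∈ SimplexS) (hmax : IsMaxOn (pay · G d) SimplexS s) : s.2.1 ≤ τ := by
  obtain ⟨hA, -, hC, hsum⟩ := hs
  by_contra! hB
  have hΛ : ∀ b c, τ ≤ b → Lam b c G = 1 := fun b c hb =>
    Lam_eq_one_of_ae (hG.mono fun p hp => Or.inl (hp.trans hb))
  have hs' : (s.1 + s.2.1 - τ, τ, s.2.2) ∈ SimplexS :=
    ⟨by dsimp only; linarith, hτ, hC, by dsimp only; linarith⟩
  have := isMaxOn_iff.mp hmax _ hs'
  rw [pay_eq_fst_of_Lam_eq_one (hΛ _ _ le_rfl), pay_eq_fst_of_Lam_eq_one (hΛ _ _ hB.le)] at this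
  dsimp only at this
  linarith

lemma snd_snd_le_of_isMaxOn [IsProbabilityMeasure G] (hG : ∀ᵐ p ∂G, p.2 ≤ τ) (hτ : 0 ≤ τ)
    (hs : s ∈ SimplexS) (hmax : IsMaxOn (pay · G d) SimplexS s) : s.2.2 ≤ τ := by
  obtain ⟨hA, hB, -, hsum⟩ := hs
  by_contra! hC
  have hΛ : ∀ b c, τ ≤ c → Lam b c G = 1 := fun b c hc =>
    Lam_eq_one_of_ae (hG.mono fun p hp => Or.inr (hp.trans hc))
  have hs' : (s.1 + s.2.2 - τ, s.2.1, τ) ∈ SimplexS :=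
    ⟨by dsimp only; linarith, hB, hτ, by dsimp only; linarith⟩
  have := isMaxOn_iff.mp hmax _ hs'
  rw [pay_eq_fst_of_Lam_eq_one (hΛ _ _ le_rfl), pay_eq_fst_of_Lam_eq_one (hΛ _ _ hC.le)] at this
  dsimp only at this
  linarith

lemma min_snd_eq_zero_of_isMaxOn [IsFiniteMeasure G] (h₁ : G.map Prod.fst = uniformIcc τ)
    (h₂ : G.map Prod.snd = uniformIcc τ) (hdiag : ∀ x > (0 : ℝ), 0 < jointCDF G x x)
    (hτ : 1 / 2 ≤ τ) (hd₀ : 0 ≤ d) (hd₁ : d < 1) (hs : s ∈ SimplexS)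
    (hb : s.2.1 ≤ τ) (hc : s.2.2 ≤ τ) (hmax : IsMaxOn (pay · G d) SimplexS s) :
    min s.2.1 s.2.2 = 0 := by
  have hτ₀ : 0 < τ := by linarith
  have hB := hs.2.1
  have hC := hs.2.2.1
  by_contra hmin
  have hm : 0 < min s.2.1 s.2.2 := (le_min hB hC).lt_of_ne' hmin
  have hΛ : Lam s.2.1 s.2.2 G < (s.2.1 + s.2.2) / τ := by
    rw [Lam_eq_of_map_eq_uniformIcc h₁ h₂ hτ₀ hB hb hC hc]
    have := (hdiag _ hm).trans_le (jointCDF_mono (G := G) (min_le_left _ _) (min_le_right _ _))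
    linarith
  have hs₀ : ((1 + d) / 2, (1 - d) / 2, (0 : ℝ)) ∈ SimplexS :=
    ⟨by linarith, by linarith, le_rfl, by ring⟩
  have := (pay_lt_of_Lam_lt hs hd₁ hτ₀ hΛ).trans_le
    ((le_pay_of_map_fst_eq_uniformIcc h₁ hτ₀ hd₁.le (by linarith)).trans
      (isMaxOn_iff.mp hmax _ hs₀))
  exact this.false

end Optimality

theorem stmt2
    (τ : ℝ) (hτ : 1 / 2 ≤ τ)
    (H : Measure (ℝ × ℝ)) (hHprob : IsProbabilityMeasure H)
    (hconc : H ((Set.Icc (0 : ℝ) τ ×ˢ Set.Icc (0 : ℝ) τ)ᶜ) = 0)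
    (hmarg1 : H.map Prod.fst = uniformIcc τ)
    (hmarg2 : H.map Prod.snd = uniformIcc τ)
    (hA1 : ∀ x > (0 : ℝ), 0 < jointCDF H x x)
    (d : ℝ) (hd0 : 0 ≤ d) (hd1 : d < 1)
    (s : ℝ × ℝ × ℝ) (hs : s ∈ SimplexS)
    (hmax : ∀ s' ∈ SimplexS, pay s' H d ≤ pay s H d) :
    min s.2.1 s.2.2 = 0 ∧ max s.2.1 s.2.2 ≤ τ := by
  have hmax' : IsMaxOn (pay · H d) SimplexS s := isMaxOn_iff.mpr hmax
  have hsupp : ∀ᵐ p ∂H, p ∈ Icc (0 : ℝ) τ ×ˢ Icc (0 : ℝ) τ := mem_ae_iff.mpr hconc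
  have hb := snd_fst_le_of_isMaxOn (hsupp.mono fun p hp => hp.1.2) (by linarith) hs hmax'
  have hc := snd_snd_le_of_isMaxOn (hsupp.mono fun p hp => hp.2.2) (by linarith) hs hmax'
  exact ⟨min_snd_eq_zero_of_isMaxOn hmarg1 hmarg2 hA1 hτ hd0 hd1 hs hb hc hmax', max_le hb hc⟩
end
end

section
/- Let G be a Borel probability measure on ℝ² and d < 1 a real number, and suppose there exists x with 0 < x < (1−d)/2 such that the joint CDF satisfies G(x, x) > 0. Then there exists an offer s* ∈ S that maximizes π(·, G, d) over S. -/
open MeasureTheory Filter Topology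

noncomputable section

/-!
`payHat` is upper semicontinuous, since `Λ` is (the acceptance region `{τ_B ≤ b ∨ τ_C ≤ c}` is the
decreasing intersection of the closed regions for `(b + r, c + r)`, `r > 0`), so it attains its
maximum on the compact simplex at some `t`. If `t_A ≥ d`, then `π(t) = π̂(t) ≥ π̂ ≥ π` and `t` is a
maximiser of `π`. Otherwise `π ≤ π̂ ≤ π̂(t) = d` on the simplex and `0 ≤ t_A < d < 1`, so the offer
`(d, (1 - d)/2, (1 - d)/2)` attains the value `d`.
-/

theorem UpperSemicontinuous.mul_of_nonneg {α : Type*} [TopologicalSpace α] {f g : α → ℝ}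
    (hf : UpperSemicontinuous f) (hg : UpperSemicontinuous g) (hf₀ : ∀ x, 0 ≤ f x)
    (hg₀ : ∀ x, 0 ≤ g x) :
    UpperSemicontinuous fun x => f x * g x := by
  intro x y hy
  have hlim : Tendsto (fun ε => (f x + ε) * (g x + ε)) (𝓝[>] 0) (𝓝 (f x * g x)) := by
    have : Continuous fun ε : ℝ => (f x + ε) * (g x + ε) := by fun_prop
    simpa using (this.tendsto 0).mono_left nhdsWithin_le_nhds
  obtain ⟨ε, hεy, hε⟩ := ((hlim.eventually_lt_const hy).and self_mem_nhdsWithin).exists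
  filter_upwards [hf x _ (lt_add_of_pos_right _ hε), hg x _ (lt_add_of_pos_right _ hε)]
    with z hfz hgz
  calc f z * g z ≤ (f x + ε) * (g x + ε) :=
        mul_le_mul hfz.le hgz.le (hg₀ z) (by linarith [hf₀ x])
    _ < y := hεy

theorem isCompact_simplexS : IsCompact SimplexS := by
  have h : SimplexS = (fun v : Fin 3 → ℝ => (v 0, v 1, v 2)) '' stdSimplex ℝ (Fin 3) := by
    ext ⟨a, b, c⟩
    constructor
    · rintro ⟨ha, hb, hc, hsum⟩
      refine ⟨![a, b, c], ⟨fun i => ?_, ?_⟩, rfl⟩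
      · fin_cases i <;> assumption
      · simpa [Fin.sum_univ_three] using hsum
    · rintro ⟨v, ⟨hv₀, hv₁⟩, hv⟩
      simp only [Prod.mk.injEq] at hv
      obtain ⟨rfl, rfl, rfl⟩ := hv
      exact ⟨hv₀ 0, hv₀ 1, hv₀ 2, by simpa [Fin.sum_univ_three, add_assoc] using hv₁⟩
  rw [h]
  exact (isCompact_stdSimplex ℝ (Fin 3)).image (by fun_prop)

theorem mem_simplexS_of_fst_le_one {a : ℝ} (ha₀ : 0 ≤ a) (ha₁ : a ≤ 1) :
    (a, (1 - a) / 2, (1 - a) / 2) ∈ SimplexS :=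
  ⟨ha₀, by linarith, by linarith, by ring⟩

section Payoff

variable (G : Measure (ℝ × ℝ)) (d : ℝ)

theorem lam_nonneg (b c : ℝ) : 0 ≤ Lam b c G :=
  ENNReal.toReal_nonneg

theorem upperSemicontinuous_lam [IsFiniteMeasure G] :
    UpperSemicontinuous fun q : ℝ × ℝ => Lam q.1 q.2 G := by
  intro q y hy
  set A : ℝ → Set (ℝ × ℝ) := fun r => {p | p.1 ≤ q.1 + r ∨ p.2 ≤ q.2 + r}
  have hA : ⋂ r > 0, A r = {p | p.1 ≤ q.1 ∨ p.2 ≤ q.2} := by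
    ext p
    simp only [A, Set.mem_iInter, Set.mem_ofPred_eq]
    constructor
    · intro h
      by_contra! hp
      have hr : 0 < min (p.1 - q.1) (p.2 - q.2) / 2 := by
        have := lt_min (sub_pos.2 hp.1) (sub_pos.2 hp.2)
        positivity
      rcases h _ hr with h' | h' <;>
        linarith [min_le_left (p.1 - q.1) (p.2 - q.2), min_le_right (p.1 - q.1) (p.2 - q.2)]
    · intro h r hr
      exact h.imp (fun h' => by linarith) (fun h' => by linarith)
  have hlim : Tendsto (fun r => (G (A r)).toReal) (𝓝[>] 0) (𝓝 (Lam q.1 q.2 G)) := by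
    have := tendsto_measure_biInter_gt (μ := G) (s := A) (a := 0)
      (fun r _ => ((isClosed_le continuous_fst continuous_const).union
        (isClosed_le continuous_snd continuous_const)).measurableSet.nullMeasurableSet)
      (fun i j _ hij p hp => hp.imp (fun h => by linarith) (fun h => by linarith))
      ⟨1, one_pos, measure_ne_top G _⟩
    rw [hA] at this
    exact (ENNReal.tendsto_toReal (measure_ne_top G _)).comp this
  obtain ⟨r, hry, hr⟩ := ((hlim.eventually_lt_const hy).and self_mem_nhdsWithin).exists
  have hr : 0 < r := hr
  filter_upwards [continuous_fst.continuousAt.eventually_lt continuous_const.continuousAt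
      (lt_add_of_pos_right q.1 hr),
    continuous_snd.continuousAt.eventually_lt continuous_const.continuousAt
      (lt_add_of_pos_right q.2 hr)] with q' h₁ h₂
  refine lt_of_le_of_lt (ENNReal.toReal_mono (measure_ne_top G _) (measure_mono ?_)) hry
  exact fun p hp => hp.imp (fun h => h.trans h₁.le) (fun h => h.trans h₂.le)

theorem upperSemicontinuous_payHat [IsFiniteMeasure G] :
    UpperSemicontinuous fun s => payHat s G d :=
  continuous_const.upperSemicontinuous.add <|
    (continuous_fst.sub continuous_const |>.max continuous_const).upperSemicontinuous.mul_of_nonneg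
      ((upperSemicontinuous_lam G).comp continuous_snd) (fun _ => le_max_right _ _)
      (fun _ => lam_nonneg G _ _)

theorem pay_le_payHat (s : ℝ × ℝ × ℝ) : pay s G d ≤ payHat s G d :=
  add_le_add_right (mul_le_mul_of_nonneg_right (le_max_left _ _) (lam_nonneg G _ _)) d

theorem payHat_eq_pay_of_le_fst {s : ℝ × ℝ × ℝ} (hs : d ≤ s.1) : payHat s G d = pay s G d := by
  rw [payHat, pay, max_eq_left (sub_nonneg.2 hs)]

theorem payHat_eq_of_fst_le {s : ℝ × ℝ × ℝ} (hs : s.1 ≤ d) : payHat s G d = d := by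
  rw [payHat, max_eq_right (sub_nonpos.2 hs), zero_mul, add_zero]

theorem pay_eq_of_fst_eq {s : ℝ × ℝ × ℝ} (hs : s.1 = d) : pay s G d = d := by
  rw [pay, hs, sub_self, zero_mul, add_zero]

end Payoff

theorem stmt7_general
    (G : Measure (ℝ × ℝ)) (hGprob : IsProbabilityMeasure G)
    (d : ℝ) (hd : d < 1) :
    ∃ s ∈ SimplexS, ∀ s' ∈ SimplexS, pay s' G d ≤ pay s G d := by
  obtain ⟨t, htS, htmax⟩ :=
    ((upperSemicontinuous_payHat G d).upperSemicontinuousOn _).exists_isMaxOn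
      ⟨_, mem_simplexS_of_fst_le_one zero_le_one le_rfl⟩ isCompact_simplexS
  have hpay : ∀ s' ∈ SimplexS, pay s' G d ≤ payHat t G d :=
    fun s' hs' => (pay_le_payHat G d s').trans (htmax hs')
  rcases le_or_gt d t.1 with ht | ht
  · exact ⟨t, htS, by simpa only [payHat_eq_pay_of_le_fst G d ht] using hpay⟩
  · have hd₀ : 0 ≤ d := htS.1.trans ht.le
    refine ⟨_, mem_simplexS_of_fst_le_one hd₀ hd.le, fun s' hs' => ?_⟩
    calc pay s' G d ≤ payHat t G d := hpay s' hs'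
      _ = d := payHat_eq_of_fst_le G d ht.le
      _ = pay (d, _, _) G d := (pay_eq_of_fst_eq G d rfl).symm

theorem stmt7
    (G : Measure (ℝ × ℝ)) (hGprob : IsProbabilityMeasure G)
    (d : ℝ) (hd : d < 1)
    (hx : ∃ x : ℝ, 0 < x ∧ x < (1 - d) / 2 ∧ 0 < jointCDF G x x) :
    ∃ s ∈ SimplexS, ∀ s' ∈ SimplexS, pay s' G d ≤ pay s G d :=
  stmt7_general G hGprob d hd
end
end
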